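/- Under Assumption SCD*, let b, b', b'' be bundles satisfying φ(b,t0) < φ(b',t0) < φ(b'',t0) and φ(b,t1) > φ(b',t1) > φ(b'',t1). Then there exists λ ∈ [0,1] with φ(b',t) ≤ λ·φ(b,t) + (1−λ)·φ(b'',t) for all t ∈ T (i.e., b' is very weakly dominated by a convex combination of b and b'') if and only if (φ(b,t1) − φ(b',t1))/(φ(b',t1) − φ(b'',t1)) ≥ (φ(b,t0) − φ(b',t0))/(φ(b',t0) − φ(b'',t0)). -/
import Mathlib


namespace Paper

abbrev Bundle (n : ℕ) := Finset (Fin n)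

variable {n : ℕ}

/-- A stochastic bundle: nonnegative weights on bundles summing to one. -/
def IsStoch (a : Bundle n → ℝ) : Prop :=
  (∀ b, 0 ≤ a b) ∧ ∑ b, a b = 1

/-- The point mass at a bundle, viewed as a stochastic bundle. -/
def pt (b : Bundle n) : Bundle n → ℝ := fun b' => if b' = b then 1 else 0

/-- Virtual value of a stochastic bundle (linear extension). -/
def phiA (φ : Bundle n → ℝ → ℝ) (a : Bundle n → ℝ) (t : ℝ) : ℝ :=
  ∑ b, a b * φ b t

/-- A function is single-crossing on a set: its sign is monotone there. -/
def SingleCrossingOn (g : ℝ → ℝ) (T : Set ℝ) : Prop :=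
  MonotoneOn (fun t => Real.sign (g t)) T ∨ AntitoneOn (fun t => Real.sign (g t)) T

/-- Assumption SCD*: differences of virtual values of stochastic bundles are
single-crossing in the type. -/
def SCDstar (φ : Bundle n → ℝ → ℝ) (t0 t1 : ℝ) : Prop :=
  ∀ a a' : Bundle n → ℝ, IsStoch a → IsStoch a' →
    SingleCrossingOn (fun t => phiA φ a t - phiA φ a' t) (Set.Icc t0 t1)

/-- Assumption MD: differences of virtual values of deterministic bundles are
monotone in the type. -/
def MD (φ : Bundle n → ℝ → ℝ) (t0 t1 : ℝ) : Prop :=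
  ∀ b b' : Bundle n,
    MonotoneOn (fun t => φ b t - φ b' t) (Set.Icc t0 t1) ∨
    AntitoneOn (fun t => φ b t - φ b' t) (Set.Icc t0 t1)

/-- No two distinct bundles have identical virtual value functions on T. -/
def Distinct (φ : Bundle n → ℝ → ℝ) (t0 t1 : ℝ) : Prop :=
  ∀ b b' : Bundle n, b ≠ b' → ∃ t ∈ Set.Icc t0 t1, φ b t ≠ φ b' t

/-- A stochastic bundle is very weakly dominated. -/
def VWD (φ : Bundle n → ℝ → ℝ) (t0 t1 : ℝ) (a : Bundle n → ℝ) : Prop :=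
  ∃ a' : Bundle n → ℝ, IsStoch a' ∧ a' ≠ a ∧
    ∀ t ∈ Set.Icc t0 t1, phiA φ a t ≤ phiA φ a' t

/-- A bundle is a never strict best response. -/
def NeverStrictBR (φ : Bundle n → ℝ → ℝ) (t0 t1 : ℝ) (b : Bundle n) : Prop :=
  ∀ t ∈ Set.Icc t0 t1, ∃ b' : Bundle n, b' ≠ b ∧ φ b t ≤ φ b' t

/-- A menu is optimal if at every type some element attains the upper envelope. -/
def OptimalMenu (φ : Bundle n → ℝ → ℝ) (t0 t1 : ℝ) (S : Finset (Bundle n)) : Prop :=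
  ∀ t ∈ Set.Icc t0 t1, ∃ b ∈ S, ∀ b' : Bundle n, φ b' t ≤ φ b t

/-- A minimal optimal menu. -/
def MinimalOptimalMenu (φ : Bundle n → ℝ → ℝ) (t0 t1 : ℝ) (S : Finset (Bundle n)) : Prop :=
  OptimalMenu φ t0 t1 S ∧ ∀ S' : Finset (Bundle n), S' ⊂ S → ¬ OptimalMenu φ t0 t1 S'

/-- A nested menu: any two elements are comparable under set inclusion. -/
def IsNestedMenu (S : Finset (Bundle n)) : Prop :=
  ∀ b1 ∈ S, ∀ b2 ∈ S, b1 ⊆ b2 ∨ b2 ⊆ b1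

/-- A tree menu: a nonempty root contained in every nonempty element, and two
incomparable elements. -/
def IsTreeMenu (S : Finset (Bundle n)) : Prop :=
  (∃ r ∈ S, r ≠ (∅ : Bundle n) ∧ ∀ b ∈ S, b ≠ (∅ : Bundle n) → r ⊆ b) ∧
  (∃ b1 ∈ S, ∃ b2 ∈ S, ¬ b1 ⊆ b2 ∧ ¬ b2 ⊆ b1)

lemma aux_sum_pt (b : Bundle n) : ∑ c, pt b c = 1 := by
  simp [pt]

lemma aux_phiA_pt (φ : Bundle n → ℝ → ℝ) (b : Bundle n) (t : ℝ) : phiA φ (pt b) t = φ b t := by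
  simp [phiA, pt, ite_mul]

lemma aux_isStoch_pt (b : Bundle n) : IsStoch (pt b) := by
  refine ⟨fun c => ?_, aux_sum_pt b⟩
  simp only [pt]; split_ifs <;> norm_num

lemma aux_isStoch_mix (b b'' : Bundle n) (l : ℝ) (h0 : 0 ≤ l) (h1 : l ≤ 1) :
    IsStoch (fun c => l * pt b c + (1 - l) * pt b'' c) := by
  constructor
  · intro c
    have hb : 0 ≤ pt b c := (aux_isStoch_pt b).1 c
    have hb'' : 0 ≤ pt b'' c := (aux_isStoch_pt b'').1 c
    exact add_nonneg (mul_nonneg h0 hb) (mul_nonneg (by linarith) hb'')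
  · rw [Finset.sum_add_distrib, ← Finset.mul_sum, ← Finset.mul_sum, aux_sum_pt, aux_sum_pt]
    ring

lemma aux_phiA_mix (φ : Bundle n → ℝ → ℝ) (b b'' : Bundle n) (l t : ℝ) :
    phiA φ (fun c => l * pt b c + (1 - l) * pt b'' c) t = l * φ b t + (1 - l) * φ b'' t := by
  simp only [phiA, add_mul, mul_assoc, Finset.sum_add_distrib, ← Finset.mul_sum]
  rw [show ∑ c, pt b c * φ c t = φ b t from by simp [pt, ite_mul],
      show ∑ c, pt b'' c * φ c t = φ b'' t from by simp [pt, ite_mul]]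

lemma aux_sign_nonneg_iff {x : ℝ} : 0 ≤ Real.sign x ↔ 0 ≤ x := by
  constructor
  · intro h
    by_contra hx
    rw [Real.sign_of_neg (lt_of_not_ge hx)] at h
    linarith
  · intro h
    rcases h.lt_or_eq with h | h
    · rw [Real.sign_of_pos h]; norm_num
    · rw [← h, Real.sign_zero]

/-- **Lemma 2.** Under Assumption SCD*, for bundles b, b', b'' sandwiched as
φ(b,t0) < φ(b',t0) < φ(b'',t0) and φ(b,t1) > φ(b',t1) > φ(b'',t1), the middle bundle b'
is very weakly dominated by a convex combination of b and b'' if and only if the ratio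
condition holds. -/
theorem stmt6 {n : ℕ} (hn : 1 ≤ n) (t0 t1 : ℝ) (ht : t0 < t1)
    (φ : Bundle n → ℝ → ℝ)
    (hcont : ∀ b : Bundle n, ContinuousOn (φ b) (Set.Icc t0 t1))
    (hscd : SCDstar φ t0 t1)
    (b b' b'' : Bundle n)
    (h00 : φ b t0 < φ b' t0) (h01 : φ b' t0 < φ b'' t0)
    (h10 : φ b'' t1 < φ b' t1) (h11 : φ b' t1 < φ b t1) :
    (∃ l ∈ Set.Icc (0 : ℝ) 1, ∀ t ∈ Set.Icc t0 t1,
        φ b' t ≤ l * φ b t + (1 - l) * φ b'' t) ↔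
      (φ b t0 - φ b' t0) / (φ b' t0 - φ b'' t0) ≤
        (φ b t1 - φ b' t1) / (φ b' t1 - φ b'' t1) := by
  have ht0m : t0 ∈ Set.Icc t0 t1 := Set.mem_Icc.2 ⟨le_refl t0, ht.le⟩
  have ht1m : t1 ∈ Set.Icc t0 t1 := Set.mem_Icc.2 ⟨ht.le, le_refl t1⟩
  have hrw : ((φ b t0 - φ b' t0) / (φ b' t0 - φ b'' t0) ≤
        (φ b t1 - φ b' t1) / (φ b' t1 - φ b'' t1)) ↔
      (φ b' t0 - φ b t0) * (φ b' t1 - φ b'' t1) ≤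
        (φ b t1 - φ b' t1) * (φ b'' t0 - φ b' t0) := by
    rw [show φ b t0 - φ b' t0 = -(φ b' t0 - φ b t0) by ring,
        show φ b' t0 - φ b'' t0 = -(φ b'' t0 - φ b' t0) by ring, neg_div_neg_eq,
        div_le_div_iff₀ (by linarith) (by linarith)]
  rw [hrw]
  constructor
  · rintro ⟨l, ⟨hl0, hl1⟩, hdom⟩
    have hA0 := hdom t0 ht0m
    have hA1 := hdom t1 ht1m
    have hl1' : l < 1 := by nlinarith [hA0]
    have h1 : 0 ≤ (φ b' t0 - φ b t0) *
        (l * (φ b t1 - φ b'' t1) - (φ b' t1 - φ b'' t1)) :=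
      mul_nonneg (by linarith) (by nlinarith [hA1])
    have h2 : 0 ≤ (φ b t1 - φ b' t1) *
        ((φ b'' t0 - φ b' t0) - l * (φ b'' t0 - φ b t0)) :=
      mul_nonneg (by linarith) (by nlinarith [hA0])
    nlinarith [h1, h2, hl1']
  · intro hkey
    have hCA : (0 : ℝ) < φ b'' t0 - φ b t0 := by linarith
    have hden : φ b'' t0 - φ b t0 ≠ 0 := ne_of_gt hCA
    set l : ℝ := (φ b'' t0 - φ b' t0) / (φ b'' t0 - φ b t0) with hl
    have hl0 : 0 ≤ l := div_nonneg (by linarith) hCA.le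
    have hl1 : l ≤ 1 := by rw [hl, div_le_one hCA]; linarith
    have hg0 : l * φ b t0 + (1 - l) * φ b'' t0 - φ b' t0 = 0 := by
      rw [hl]; field_simp; ring
    have hg1 : 0 ≤ l * φ b t1 + (1 - l) * φ b'' t1 - φ b' t1 := by
      have hnum : 0 ≤ (φ b'' t0 - φ b' t0) * (φ b t1 - φ b'' t1) -
          (φ b' t1 - φ b'' t1) * (φ b'' t0 - φ b t0) := by linarith [hkey]
      have hexp : l * φ b t1 + (1 - l) * φ b'' t1 - φ b' t1 =
          ((φ b'' t0 - φ b' t0) * (φ b t1 - φ b'' t1) -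
            (φ b' t1 - φ b'' t1) * (φ b'' t0 - φ b t0)) / (φ b'' t0 - φ b t0) := by
        rw [hl]; field_simp; ring
      rw [hexp]
      exact div_nonneg hnum hCA.le
    refine ⟨l, Set.mem_Icc.2 ⟨hl0, hl1⟩, ?_⟩
    have hsc := hscd (fun c => l * pt b c + (1 - l) * pt b'' c) (pt b')
      (aux_isStoch_mix b b'' l hl0 hl1) (aux_isStoch_pt b')
    have hfun : ∀ t : ℝ, phiA φ (fun c => l * pt b c + (1 - l) * pt b'' c) t -
        phiA φ (pt b') t = l * φ b t + (1 - l) * φ b'' t - φ b' t :=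
      fun t => by rw [aux_phiA_mix, aux_phiA_pt]
    simp only [hfun] at hsc
    intro t htm
    have hgt : 0 ≤ l * φ b t + (1 - l) * φ b'' t - φ b' t := by
      rcases hsc with hmono | hanti
      · have := hmono ht0m htm (Set.mem_Icc.1 htm).1
        simp only [hg0, Real.sign_zero] at this
        exact aux_sign_nonneg_iff.1 this
      · have := hanti htm ht1m (Set.mem_Icc.1 htm).2
        have h1s : 0 ≤ Real.sign (l * φ b t1 + (1 - l) * φ b'' t1 - φ b' t1) :=
          aux_sign_nonneg_iff.2 hg1
        exact aux_sign_nonneg_iff.1 (le_trans h1s this)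
    linarith

end Paper
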